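/- arXiv:2507.22865 — 2 statements merged into one kernel-verified Lean document; each statement's English description precedes it below -/
import Mathlib

section
/- Let Q = [[Λ, Ψ],[0, 0]] be a block matrix with Λ an invertible n×n real matrix all of whose eigenvalues have negative real part (so exp(tΛ) → 0 as t → ∞), and Ψ an n×m real matrix. Then lim_{t→∞} exp(tQ) = [[0, -Λ^{-1}Ψ],[0, I_m]]. -/
open Matrix Filter

/-- Powers of a block upper-left/lower-right diagonal matrix. -/
lemma fromBlocks_diag_pow {n m : ℕ} (A : Matrix (Fin n) (Fin n) ℝ)
    (D : Matrix (Fin m) (Fin m) ℝ) (k : ℕ) :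
    (Matrix.fromBlocks A 0 0 D) ^ k = Matrix.fromBlocks (A ^ k) 0 0 (D ^ k) := by
  induction k with
  | zero => simp [Matrix.fromBlocks_one]
  | succ k ih =>
    rw [pow_succ, pow_succ, pow_succ, ih, Matrix.fromBlocks_multiply]
    simp

/-- Exponential of a block diagonal 2x2 block matrix. -/
lemma exp_fromBlocks_diag {n m : ℕ} (A : Matrix (Fin n) (Fin n) ℝ)
    (D : Matrix (Fin m) (Fin m) ℝ) :
    NormedSpace.exp (Matrix.fromBlocks A 0 0 D) =
      Matrix.fromBlocks (NormedSpace.exp A) 0 0 (NormedSpace.exp D) := by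
  have hA : HasSum (fun k : ℕ => ((Nat.factorial k : ℝ)⁻¹) • A ^ k) (NormedSpace.exp A) := by
    letI : NormedRing (Matrix (Fin n) (Fin n) ℝ) := Matrix.linftyOpNormedRing
    letI : NormedAlgebra ℝ (Matrix (Fin n) (Fin n) ℝ) := Matrix.linftyOpNormedAlgebra
    exact NormedSpace.exp_series_hasSum_exp' A
  have hD : HasSum (fun k : ℕ => ((Nat.factorial k : ℝ)⁻¹) • D ^ k) (NormedSpace.exp D) := by
    letI : NormedRing (Matrix (Fin m) (Fin m) ℝ) := Matrix.linftyOpNormedRing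
    letI : NormedAlgebra ℝ (Matrix (Fin m) (Fin m) ℝ) := Matrix.linftyOpNormedAlgebra
    exact NormedSpace.exp_series_hasSum_exp' D
  -- additive monoid homs embedding the blocks
  let ψ₁ : Matrix (Fin n) (Fin n) ℝ →+ Matrix (Fin n ⊕ Fin m) (Fin n ⊕ Fin m) ℝ :=
    { toFun := fun X => Matrix.fromBlocks X 0 0 0
      map_zero' := by simp
      map_add' := by intro X Y; rw [Matrix.fromBlocks_add]; simp }
  let ψ₂ : Matrix (Fin m) (Fin m) ℝ →+ Matrix (Fin n ⊕ Fin m) (Fin n ⊕ Fin m) ℝ :=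
    { toFun := fun X => Matrix.fromBlocks 0 0 0 X
      map_zero' := by simp
      map_add' := by intro X Y; rw [Matrix.fromBlocks_add]; simp }
  have c₁ : Continuous ψ₁ :=
    Continuous.matrix_fromBlocks continuous_id continuous_const continuous_const continuous_const
  have c₂ : Continuous ψ₂ :=
    Continuous.matrix_fromBlocks continuous_const continuous_const continuous_const continuous_id
  have h := (hA.map ψ₁ c₁).add (hD.map ψ₂ c₂)
  have hsum : HasSum
      (fun k : ℕ => Matrix.fromBlocks (((Nat.factorial k : ℝ)⁻¹) • A ^ k) 0 0 (((Nat.factorial k : ℝ)⁻¹) • D ^ k))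
      (Matrix.fromBlocks (NormedSpace.exp A) 0 0 (NormedSpace.exp D)) := by
    have e1 : ∀ k : ℕ,
        Matrix.fromBlocks (((Nat.factorial k : ℝ)⁻¹) • A ^ k) 0 0 (((Nat.factorial k : ℝ)⁻¹) • D ^ k) =
          ψ₁ (((Nat.factorial k : ℝ)⁻¹) • A ^ k) + ψ₂ (((Nat.factorial k : ℝ)⁻¹) • D ^ k) := by
      intro k
      simp [ψ₁, ψ₂, Matrix.fromBlocks_add]
    have e2 : Matrix.fromBlocks (NormedSpace.exp A) 0 0 (NormedSpace.exp D) =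
        ψ₁ (NormedSpace.exp A) + ψ₂ (NormedSpace.exp D) := by
      simp [ψ₁, ψ₂, Matrix.fromBlocks_add]
    rw [e2]
    simpa [e1] using h
  rw [NormedSpace.exp_eq_tsum (𝕂 := ℝ)]
  have : (fun k : ℕ => ((Nat.factorial k : ℝ)⁻¹) • Matrix.fromBlocks A 0 0 D ^ k) =
      fun k : ℕ => Matrix.fromBlocks (((Nat.factorial k : ℝ)⁻¹) • A ^ k) 0 0 (((Nat.factorial k : ℝ)⁻¹) • D ^ k) := by
    funext k
    rw [fromBlocks_diag_pow, Matrix.fromBlocks_smul, smul_zero, smul_zero]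
  simp only [this]
  exact hsum.tsum_eq

/-- If exp(tΛ) → 0 as t → ∞, then for Q = [[Λ, Ψ],[0,0]] with Λ invertible,
exp(tQ) → [[0, -Λ⁻¹Ψ],[0, I]] entrywise as t → ∞. -/
theorem block_matrix_exp_limit
    (n m : ℕ) (Λ : Matrix (Fin n) (Fin n) ℝ) (Ψ : Matrix (Fin n) (Fin m) ℝ)
    (hΛ : IsUnit Λ)
    (hstable : Filter.Tendsto (fun t : ℝ => NormedSpace.exp (t • Λ)) Filter.atTop (nhds 0))
    (Q : Matrix (Fin n ⊕ Fin m) (Fin n ⊕ Fin m) ℝ)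
    (hQ : Q = Matrix.fromBlocks Λ Ψ 0 0) :
    Filter.Tendsto (fun t : ℝ => NormedSpace.exp (t • Q)) Filter.atTop
      (nhds (Matrix.fromBlocks 0 (-(Λ⁻¹ * Ψ)) 0 1)) := by
  have hΛdet : IsUnit Λ.det := (Matrix.isUnit_iff_isUnit_det _).mp hΛ
  set C : Matrix (Fin n) (Fin m) ℝ := Λ⁻¹ * Ψ with hC
  set S : Matrix (Fin n ⊕ Fin m) (Fin n ⊕ Fin m) ℝ := Matrix.fromBlocks 1 C 0 1 with hS
  set T : Matrix (Fin n ⊕ Fin m) (Fin n ⊕ Fin m) ℝ := Matrix.fromBlocks 1 (-C) 0 1 with hT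
  have hST : S * T = 1 := by
    rw [hS, hT, Matrix.fromBlocks_multiply]
    simp [Matrix.fromBlocks_one]
  have hSunit : IsUnit S := by
    have hdet : S.det * T.det = 1 := by rw [← Matrix.det_mul, hST, Matrix.det_one]
    exact (Matrix.isUnit_iff_isUnit_det S).mpr (IsUnit.of_mul_eq_one _ hdet)
  have hSinv : S⁻¹ = T := Matrix.inv_eq_right_inv hST
  have hΛC : Λ * C = Ψ := by
    rw [hC, ← Matrix.mul_assoc, Matrix.mul_nonsing_inv _ hΛdet, Matrix.one_mul]
  set D : Matrix (Fin n ⊕ Fin m) (Fin n ⊕ Fin m) ℝ := Matrix.fromBlocks Λ 0 0 0 with hD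
  have hQconj : ∀ t : ℝ, t • Q = S⁻¹ * (t • D) * S := by
    intro t
    have h1 : S⁻¹ * D * S = Q := by
      rw [hSinv, hT, hD, hS, hQ, Matrix.fromBlocks_multiply, Matrix.fromBlocks_multiply]
      simp [hΛC]
    calc t • Q = t • (S⁻¹ * D * S) := by rw [h1]
      _ = S⁻¹ * (t • D) * S := by
          rw [Matrix.mul_smul, Matrix.smul_mul]
  have hexp : ∀ t : ℝ, NormedSpace.exp (t • Q) =
      Matrix.fromBlocks (NormedSpace.exp (t • Λ))
        (NormedSpace.exp (t • Λ) * C - C) 0 1 := by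
    intro t
    rw [hQconj t, Matrix.exp_conj' S (t • D) hSunit]
    have htD : t • D = Matrix.fromBlocks (t • Λ) 0 0 0 := by
      rw [hD, Matrix.fromBlocks_smul, smul_zero, smul_zero, smul_zero]
    rw [htD, exp_fromBlocks_diag, NormedSpace.exp_zero, hSinv, hT, hS,
      Matrix.fromBlocks_multiply, Matrix.fromBlocks_multiply]
    congr 1 <;> simp [sub_eq_add_neg]
  have hcont : Continuous fun X : Matrix (Fin n) (Fin n) ℝ =>
      Matrix.fromBlocks X (X * C - C) (0 : Matrix (Fin m) (Fin n) ℝ)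
        (1 : Matrix (Fin m) (Fin m) ℝ) := by
    apply Continuous.matrix_fromBlocks
    · exact continuous_id
    · exact (continuous_id.matrix_mul continuous_const).sub continuous_const
    · exact continuous_const
    · exact continuous_const
  have := (hcont.tendsto 0).comp hstable
  simp only [Function.comp_def] at this
  have hfun : (fun t : ℝ => Matrix.fromBlocks (NormedSpace.exp (t • Λ))
      (NormedSpace.exp (t • Λ) * C - C) (0 : Matrix (Fin m) (Fin n) ℝ)
      (1 : Matrix (Fin m) (Fin m) ℝ)) = fun t : ℝ => NormedSpace.exp (t • Q) := by
    funext t; exact (hexp t).symm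
  rw [← hfun]
  convert this using 2
  rw [Matrix.zero_mul, zero_sub]
end

section
/- Let α, β, μ > 0, A > 0, and B₁ > 0 with Γ = (1/(α+β))·ln((α+β+μ)B₁/(μA)) > 0 (equivalently (α+β+μ)B₁ > μA). Then B₁ > A - (α+β)/(α+β+μ)·A·e^{-μΓ}. -/
open Real

/-- With Γ = (1/(α+β)) ln((α+β+μ)B₁/(μA)) > 0, we have
B₁ > A - ((α+β)/(α+β+μ)) A e^{-μΓ}. -/
theorem B1_lower_bound
    (α β μ A B₁ Γ : ℝ) (hα : 0 < α) (hβ : 0 < β) (hμ : 0 < μ)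
    (hA : 0 < A) (hB : 0 < B₁)
    (hΓdef : Γ = (1/(α+β)) * Real.log ((α+β+μ)*B₁/(μ*A)))
    (hΓpos : 0 < Γ) :
    B₁ > A - (α+β)/(α+β+μ) * A * Real.exp (-μ*Γ) := by
  have hs : 0 < α + β := by linarith
  have hsum : 0 < α + β + μ := by linarith
  have hlog : (α+β)*Γ = Real.log ((α+β+μ)*B₁/(μ*A)) := by
    rw [hΓdef]; field_simp
  have hexp : Real.exp ((α+β)*Γ) = (α+β+μ)*B₁/(μ*A) := by
    rw [hlog, Real.exp_log (by positivity)]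
  have key : Real.exp ((α+β)*Γ) * (μ*A) = (α+β+μ)*B₁ := by
    rw [hexp]; field_simp
  have h1 : 1 + (α+β)*Γ < Real.exp ((α+β)*Γ) := by
    have := Real.add_one_lt_exp (x := (α+β)*Γ) (by positivity)
    linarith
  have h2 : 1 + (-μ*Γ) ≤ Real.exp (-μ*Γ) := by have := Real.add_one_le_exp (-μ*Γ); linarith
  have main : A*(α+β+μ) - (α+β)*A*Real.exp (-μ*Γ) < B₁*(α+β+μ) := by
    have t1 := mul_lt_mul_of_pos_left h1 (mul_pos hμ hA)
    have t2 := mul_le_mul_of_nonneg_left h2 (by positivity : (0:ℝ) ≤ (α+β)*A)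
    nlinarith [t1, t2, key]
  have heq : A - (α+β)/(α+β+μ)*A*Real.exp (-μ*Γ)
      = (A*(α+β+μ) - (α+β)*A*Real.exp (-μ*Γ))/(α+β+μ) := by
    field_simp
  rw [gt_iff_lt, heq, div_lt_iff₀ hsum]
  exact main
end
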